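/- arXiv:2505.00727 — 6 statements merged into one kernel-verified Lean document; each statement's English description precedes it below -/
import Mathlib

section
/- Under the Setup, if x is a positive integer such that L₁(x)/r₁ ∈ E₂(C) and L₂(x)/r₂ ∈ E₂(C), then the positive integer n = a₁L₂(x) satisfies d(n+1)/d(n) = d(a₂r₁)/d(a₁r₂). -/
/-- `d n` is the number of positive divisors of `n`. -/
def d (n : ℕ) : ℕ := n.divisors.card

/-- `E2 C` is the set of products `p₁ * p₂` of two distinct primes both exceeding `C`. -/
def E2 (C : ℕ) : Set ℕ :=
  {m | ∃ p q : ℕ, p.Prime ∧ q.Prime ∧ p ≠ q ∧ C < p ∧ C < q ∧ m = p * q}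

/-- Setup: `a` even positive, `a₁ = a`, `a₂ = a+1`, `a₃ = a+2`, `Lᵢ(x) = aᵢx+1`;
`r₁, r₂, r₃` pairwise coprime odd positive integers with `gcd(rᵢ, aᵢ) = 1`; `C` the
largest prime factor of `a₁a₂a₃r₁r₂r₃`. If `x` is a positive integer with
`L₁(x)/r₁ ∈ E₂(C)` and `L₂(x)/r₂ ∈ E₂(C)`, then `n = a₁L₂(x)` satisfies
`d(n+1)/d(n) = d(a₂r₁)/d(a₁r₂)`. -/
theorem stmt_4 (a : ℕ) (ha : 0 < a) (hae : Even a)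
    (r₁ r₂ r₃ : ℕ) (hr₁ : 0 < r₁) (hr₂ : 0 < r₂) (hr₃ : 0 < r₃)
    (hodd₁ : Odd r₁) (hodd₂ : Odd r₂) (hodd₃ : Odd r₃)
    (h₁₂ : Nat.Coprime r₁ r₂) (h₁₃ : Nat.Coprime r₁ r₃) (h₂₃ : Nat.Coprime r₂ r₃)
    (hra₁ : Nat.Coprime r₁ a) (hra₂ : Nat.Coprime r₂ (a + 1)) (hra₃ : Nat.Coprime r₃ (a + 2))
    (C : ℕ)
    (hCmem : C ∈ (a * (a + 1) * (a + 2) * r₁ * r₂ * r₃).primeFactors)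
    (hCmax : ∀ p ∈ (a * (a + 1) * (a + 2) * r₁ * r₂ * r₃).primeFactors, p ≤ C)
    (x : ℕ) (hx : 0 < x)
    (h1 : r₁ ∣ a * x + 1 ∧ (a * x + 1) / r₁ ∈ E2 C)
    (h2 : r₂ ∣ (a + 1) * x + 1 ∧ ((a + 1) * x + 1) / r₂ ∈ E2 C) :
    (d (a * ((a + 1) * x + 1) + 1) : ℚ) / (d (a * ((a + 1) * x + 1)) : ℚ) =
      (d ((a + 1) * r₁) : ℚ) / (d (a * r₂) : ℚ) := by
  set M := a * (a + 1) * (a + 2) * r₁ * r₂ * r₃ with hM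
  have hMpos : 0 < M := by positivity
  -- any prime > C is coprime to any divisor of M
  have key : ∀ p : ℕ, p.Prime → C < p → ∀ m : ℕ, m ∣ M → Nat.Coprime p m := by
    intro p hp hCp m hm
    rw [hp.coprime_iff_not_dvd]
    intro hpm
    have : p ∈ M.primeFactors := Nat.mem_primeFactors.mpr ⟨hp, hpm.trans hm, hMpos.ne'⟩
    exact absurd (hCmax p this) (not_le.mpr hCp)
  obtain ⟨hd1, p, q, hp, hq, hpq, hCp, hCq, hE1⟩ := h1
  obtain ⟨hd2, p', q', hp', hq', hpq', hCp', hCq', hE2⟩ := h2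
  have e1 : a * x + 1 = r₁ * (p * q) := by
    rw [← hE1, Nat.mul_div_cancel' hd1]
  have e2 : (a + 1) * x + 1 = r₂ * (p' * q') := by
    rw [← hE2, Nat.mul_div_cancel' hd2]
  have hn1 : a * ((a + 1) * x + 1) + 1 = (a + 1) * r₁ * (p * q) := by
    have : a * ((a + 1) * x + 1) + 1 = (a + 1) * (a * x + 1) := by ring
    rw [this, e1]; ring
  have hn : a * ((a + 1) * x + 1) = a * r₂ * (p' * q') := by
    rw [e2]; ring
  have hdvd1 : (a + 1) * r₁ ∣ M := ⟨a * (a + 2) * r₂ * r₃, by ring⟩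
  have hdvd2 : a * r₂ ∣ M := ⟨(a + 1) * (a + 2) * r₁ * r₃, by ring⟩
  have cop1 : Nat.Coprime ((a + 1) * r₁) (p * q) :=
    Nat.Coprime.mul_right ((key p hp hCp _ hdvd1).symm) ((key q hq hCq _ hdvd1).symm)
  have cop2 : Nat.Coprime (a * r₂) (p' * q') :=
    Nat.Coprime.mul_right ((key p' hp' hCp' _ hdvd2).symm) ((key q' hq' hCq' _ hdvd2).symm)
  have dprime : ∀ p : ℕ, p.Prime → d p = 2 := by
    intro p hp
    rw [d, hp.divisors, Finset.card_insert_of_notMem (by simp [hp.one_lt.ne]),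
      Finset.card_singleton]
  have d4 : ∀ p q : ℕ, p.Prime → q.Prime → p ≠ q → d (p * q) = 4 := by
    intro p q hp hq hpq
    have : Nat.Coprime p q := (Nat.coprime_primes hp hq).mpr hpq
    rw [d, this.card_divisors_mul, ← d, ← d, dprime p hp, dprime q hq]
  have D1 : d (a * ((a + 1) * x + 1) + 1) = d ((a + 1) * r₁) * 4 := by
    rw [hn1, d, cop1.card_divisors_mul, ← d, ← d, d4 p q hp hq hpq]
  have D2 : d (a * ((a + 1) * x + 1)) = d (a * r₂) * 4 := by
    rw [hn, d, cop2.card_divisors_mul, ← d, ← d, d4 p' q' hp' hq' hpq']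
  rw [D1, D2]
  push_cast
  rw [mul_div_mul_right _ _ (by norm_num : (4:ℚ) ≠ 0)]
end

section
/- Under the Setup, if x is a positive integer such that L₂(x)/r₂ ∈ E₂(C) and L₃(x)/r₃ ∈ E₂(C), then the positive integer n = a₂L₃(x) satisfies d(n+1)/d(n) = d(a₃r₂)/d(a₂r₃). -/
lemma d_mul_E2 (m p q C : ℕ) (hm : m ≠ 0) (hmN : ∀ s : ℕ, s.Prime → s ∣ m → s ≤ C)
    (hp : p.Prime) (hq : q.Prime) (hpq : p ≠ q) (hCp : C < p) (hCq : C < q) :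
    d (m * (p * q)) = d m * 4 := by
  have hcp : Nat.Coprime m p := ((hp.coprime_iff_not_dvd).mpr
    (fun h => absurd (hmN p hp h) (not_le.mpr hCp))).symm
  have hcq : Nat.Coprime m q := ((hq.coprime_iff_not_dvd).mpr
    (fun h => absurd (hmN q hq h) (not_le.mpr hCq))).symm
  have h1 : Nat.Coprime m (p * q) := hcp.mul_right hcq
  have h2 : Nat.Coprime p q := (Nat.coprime_primes hp hq).mpr hpq
  unfold d
  rw [h1.card_divisors_mul, h2.card_divisors_mul, hp.divisors, hq.divisors]
  have : ({1, p} : Finset ℕ).card = 2 := by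
    rw [Finset.card_insert_of_notMem (by simp [hp.one_lt.ne]), Finset.card_singleton]
  have hq2 : ({1, q} : Finset ℕ).card = 2 := by
    rw [Finset.card_insert_of_notMem (by simp [hq.one_lt.ne]), Finset.card_singleton]
  rw [this, hq2]

/-- Setup: `a` even positive, `a₁ = a`, `a₂ = a+1`, `a₃ = a+2`, `Lᵢ(x) = aᵢx+1`;
`r₁, r₂, r₃` pairwise coprime odd positive integers with `gcd(rᵢ, aᵢ) = 1`; `C` the
largest prime factor of `a₁a₂a₃r₁r₂r₃`. If `x` is a positive integer with
`L₂(x)/r₂ ∈ E₂(C)` and `L₃(x)/r₃ ∈ E₂(C)`, then `n = a₂L₃(x)` satisfies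
`d(n+1)/d(n) = d(a₃r₂)/d(a₂r₃)`. -/
theorem stmt_5 (a : ℕ) (ha : 0 < a) (hae : Even a)
    (r₁ r₂ r₃ : ℕ) (hr₁ : 0 < r₁) (hr₂ : 0 < r₂) (hr₃ : 0 < r₃)
    (hodd₁ : Odd r₁) (hodd₂ : Odd r₂) (hodd₃ : Odd r₃)
    (h₁₂ : Nat.Coprime r₁ r₂) (h₁₃ : Nat.Coprime r₁ r₃) (h₂₃ : Nat.Coprime r₂ r₃)
    (hra₁ : Nat.Coprime r₁ a) (hra₂ : Nat.Coprime r₂ (a + 1)) (hra₃ : Nat.Coprime r₃ (a + 2))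
    (C : ℕ)
    (hCmem : C ∈ (a * (a + 1) * (a + 2) * r₁ * r₂ * r₃).primeFactors)
    (hCmax : ∀ p ∈ (a * (a + 1) * (a + 2) * r₁ * r₂ * r₃).primeFactors, p ≤ C)
    (x : ℕ) (hx : 0 < x)
    (h2 : r₂ ∣ (a + 1) * x + 1 ∧ ((a + 1) * x + 1) / r₂ ∈ E2 C)
    (h3 : r₃ ∣ (a + 2) * x + 1 ∧ ((a + 2) * x + 1) / r₃ ∈ E2 C) :
    (d ((a + 1) * ((a + 2) * x + 1) + 1) : ℚ) / (d ((a + 1) * ((a + 2) * x + 1)) : ℚ) =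
      (d ((a + 2) * r₂) : ℚ) / (d ((a + 1) * r₃) : ℚ) := by
  obtain ⟨hd2, p, q, hp, hq, hpq, hCp, hCq, hm2⟩ := h2
  obtain ⟨hd3, p', q', hp', hq', hpq', hCp', hCq', hm3⟩ := h3
  have hN : a * (a + 1) * (a + 2) * r₁ * r₂ * r₃ ≠ 0 := by positivity
  have key : ∀ m : ℕ, m ∣ a * (a + 1) * (a + 2) * r₁ * r₂ * r₃ →
      ∀ s : ℕ, s.Prime → s ∣ m → s ≤ C := by
    intro m hm s hs hsm
    exact hCmax s (Nat.mem_primeFactors.mpr ⟨hs, hsm.trans hm, hN⟩)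
  have e2 : (a + 1) * x + 1 = r₂ * (p * q) := Nat.eq_mul_of_div_eq_right hd2 hm2
  have e3 : (a + 2) * x + 1 = r₃ * (p' * q') := Nat.eq_mul_of_div_eq_right hd3 hm3
  have eq1 : (a + 1) * ((a + 2) * x + 1) + 1 = (a + 2) * r₂ * (p * q) := by
    have : (a + 1) * ((a + 2) * x + 1) + 1 = (a + 2) * ((a + 1) * x + 1) := by ring
    rw [this, e2]; ring
  have eq0 : (a + 1) * ((a + 2) * x + 1) = (a + 1) * r₃ * (p' * q') := by
    rw [e3]; ring
  have dvd1 : (a + 2) * r₂ ∣ a * (a + 1) * (a + 2) * r₁ * r₂ * r₃ :=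
    ⟨a * (a + 1) * r₁ * r₃, by ring⟩
  have dvd0 : (a + 1) * r₃ ∣ a * (a + 1) * (a + 2) * r₁ * r₂ * r₃ :=
    ⟨a * (a + 2) * r₁ * r₂, by ring⟩
  rw [eq1, eq0, d_mul_E2 _ p q C (by positivity) (key _ dvd1) hp hq hpq hCp hCq,
    d_mul_E2 _ p' q' C (by positivity) (key _ dvd0) hp' hq' hpq' hCp' hCq']
  have hA : d ((a + 2) * r₂) ≠ 0 := by
    simp [d, Nat.divisors_eq_empty]
    positivity
  have hB : d ((a + 1) * r₃) ≠ 0 := by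
    simp [d, Nat.divisors_eq_empty]
    positivity
  push_cast
  rw [div_eq_div_iff (by positivity) (by positivity)]
  ring
end

section
/- Under the Setup, if x is a positive integer such that L₁(x)/r₁ ∈ E₂(C) and L₃(x)/r₃ ∈ E₂(C), then the positive integer n = (a₁/2)·L₃(x) satisfies d(n+1)/d(n) = d((a₃/2)·r₁)/d((a₁/2)·r₃). -/
/-- Setup: `a` even positive, `a₁ = a`, `a₂ = a+1`, `a₃ = a+2`, `Lᵢ(x) = aᵢx+1`;
`r₁, r₂, r₃` pairwise coprime odd positive integers with `gcd(rᵢ, aᵢ) = 1`; `C` the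
largest prime factor of `a₁a₂a₃r₁r₂r₃`. If `x` is a positive integer with
`L₁(x)/r₁ ∈ E₂(C)` and `L₃(x)/r₃ ∈ E₂(C)`, then `n = (a₁/2)·L₃(x)` satisfies
`d(n+1)/d(n) = d((a₃/2)·r₁)/d((a₁/2)·r₃)`. -/
theorem stmt_6 (a : ℕ) (ha : 0 < a) (hae : Even a)
    (r₁ r₂ r₃ : ℕ) (hr₁ : 0 < r₁) (hr₂ : 0 < r₂) (hr₃ : 0 < r₃)
    (hodd₁ : Odd r₁) (hodd₂ : Odd r₂) (hodd₃ : Odd r₃)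
    (h₁₂ : Nat.Coprime r₁ r₂) (h₁₃ : Nat.Coprime r₁ r₃) (h₂₃ : Nat.Coprime r₂ r₃)
    (hra₁ : Nat.Coprime r₁ a) (hra₂ : Nat.Coprime r₂ (a + 1)) (hra₃ : Nat.Coprime r₃ (a + 2))
    (C : ℕ)
    (hCmem : C ∈ (a * (a + 1) * (a + 2) * r₁ * r₂ * r₃).primeFactors)
    (hCmax : ∀ p ∈ (a * (a + 1) * (a + 2) * r₁ * r₂ * r₃).primeFactors, p ≤ C)
    (x : ℕ) (hx : 0 < x)
    (h1 : r₁ ∣ a * x + 1 ∧ (a * x + 1) / r₁ ∈ E2 C)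
    (h3 : r₃ ∣ (a + 2) * x + 1 ∧ ((a + 2) * x + 1) / r₃ ∈ E2 C) :
    (d ((a / 2) * ((a + 2) * x + 1) + 1) : ℚ) / (d ((a / 2) * ((a + 2) * x + 1)) : ℚ) =
      (d (((a + 2) / 2) * r₁) : ℚ) / (d ((a / 2) * r₃) : ℚ) := by
  obtain ⟨hd1, p, q, hp, hq, hpq, hCp, hCq, hpqeq⟩ := h1
  obtain ⟨hd3, s, t, hs, ht, hst, hCs, hCt, hsteq⟩ := h3
  obtain ⟨b, hb⟩ := hae
  have hb0 : 0 < b := by omega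
  -- key divisibility-free equations
  have e1 : a * x + 1 = r₁ * (p * q) := by
    rw [← hpqeq, Nat.mul_div_cancel' hd1]
  have e3 : (a + 2) * x + 1 = r₃ * (s * t) := by
    rw [← hsteq, Nat.mul_div_cancel' hd3]
  have ha2 : a / 2 = b := by omega
  have ha22 : (a + 2) / 2 = b + 1 := by omega
  -- identity n + 1 = ((a+2)/2) * (a*x+1)
  have key : (a / 2) * ((a + 2) * x + 1) + 1 = ((a + 2) / 2) * (a * x + 1) := by
    subst hb; rw [ha2, ha22]; ring
  have hN : (0:ℕ) < a * (a + 1) * (a + 2) * r₁ * r₂ * r₃ := by positivity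
  have hcop : ∀ P : ℕ, P.Prime → C < P → ∀ M : ℕ,
      M ∣ a * (a + 1) * (a + 2) * r₁ * r₂ * r₃ → Nat.Coprime P M := by
    intro P hP hCP M hM
    refine Nat.Coprime.coprime_dvd_right hM ?_
    rw [hP.coprime_iff_not_dvd]
    intro hdvd
    exact absurd (hCmax P (Nat.mem_primeFactors.mpr ⟨hP, hdvd, hN.ne'⟩)) (by omega)
  have dA : ((a+2)/2) * r₁ ∣ a * (a + 1) * (a + 2) * r₁ * r₂ * r₃ := by
    have : (a+2)/2 ∣ a + 2 := Nat.div_dvd_of_dvd (by omega)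
    calc ((a+2)/2) * r₁ ∣ (a + 2) * r₁ := mul_dvd_mul this dvd_rfl
      _ ∣ a * (a + 1) * (a + 2) * r₁ * r₂ * r₃ := ⟨a * (a+1) * r₂ * r₃, by ring⟩
  have dB : (a/2) * r₃ ∣ a * (a + 1) * (a + 2) * r₁ * r₂ * r₃ := by
    have : a/2 ∣ a := Nat.div_dvd_of_dvd ⟨b, by omega⟩
    calc (a/2) * r₃ ∣ a * r₃ := mul_dvd_mul this dvd_rfl
      _ ∣ a * (a + 1) * (a + 2) * r₁ * r₂ * r₃ := ⟨(a + 1) * (a+2) * r₁ * r₂, by ring⟩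
  have cpq : Nat.Coprime p q := (Nat.coprime_primes hp hq).mpr hpq
  have cst : Nat.Coprime s t := (Nat.coprime_primes hs ht).mpr hst
  have cA : Nat.Coprime (((a+2)/2) * r₁) (p * q) :=
    (Nat.Coprime.mul_right ((hcop p hp hCp _ dA).symm) ((hcop q hq hCq _ dA).symm))
  have cB : Nat.Coprime ((a/2) * r₃) (s * t) :=
    (Nat.Coprime.mul_right ((hcop s hs hCs _ dB).symm) ((hcop t ht hCt _ dB).symm))
  have d2 : ∀ P : ℕ, P.Prime → d P = 2 := by
    intro P hP
    simp only [d, hP.divisors]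
    rw [Finset.card_pair hP.one_lt.ne]
  have dpq : d (p * q) = 4 := by
    have := cpq.card_divisors_mul
    simp only [d, this]
    rw [show p.divisors.card = d p from rfl, show q.divisors.card = d q from rfl,
      d2 p hp, d2 q hq]
  have dst : d (s * t) = 4 := by
    have := cst.card_divisors_mul
    simp only [d, this]
    rw [show s.divisors.card = d s from rfl, show t.divisors.card = d t from rfl,
      d2 s hs, d2 t ht]
  have top : d ((a / 2) * ((a + 2) * x + 1) + 1) = d (((a+2)/2) * r₁) * 4 := by
    rw [key, e1, show (a+2)/2 * (r₁ * (p * q)) = (((a+2)/2) * r₁) * (p * q) by ring]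
    rw [show d ((((a+2)/2) * r₁) * (p * q)) = d (((a+2)/2) * r₁) * d (p * q) from
      cA.card_divisors_mul, dpq]
  have bot : d ((a / 2) * ((a + 2) * x + 1)) = d ((a/2) * r₃) * 4 := by
    rw [e3, show a/2 * (r₃ * (s * t)) = ((a/2) * r₃) * (s * t) by ring]
    rw [show d (((a/2) * r₃) * (s * t)) = d ((a/2) * r₃) * d (s * t) from
      cB.card_divisors_mul, dst]
  have hBpos : 0 < d ((a/2) * r₃) := by
    apply Finset.card_pos.mpr
    exact ⟨1, Nat.one_mem_divisors.mpr (by have := ha2 ▸ hb0; positivity)⟩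
  rw [top, bot]
  push_cast
  rw [mul_div_mul_right]
  norm_num
end

section
/- Let p₁, …, p_k, q₁, …, q_l be distinct odd primes, let x₁, …, x_k, y₁, …, y_k, u₁, …, u_l, v₁, …, v_l be positive integers, and set a = 4·p₁^{x₁}⋯p_k^{x_k}·q₁^{u₁}⋯q_l^{u_l}, a₁ = a, a₂ = a+1, a₃ = a+2, r₁ = 1, r₂ = p₁^{y₁}⋯p_k^{y_k}, r₃ = q₁^{v₁}⋯q_l^{v_l}. Then d(a₂r₁)·d(a₃r₂)·d((a₁/2)·r₃) / (d(a₁r₂)·d(a₂r₃)·d((a₃/2)·r₁)) = (4/3)·∏_{i=1}^{k} (xᵢ+1)(yᵢ+1)/(xᵢ+yᵢ+1) · ∏_{i=1}^{l} (uᵢ+vᵢ+1)/((uᵢ+1)(vᵢ+1)). -/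
lemma d_mul {m n : ℕ} (h : m.Coprime n) : d (m * n) = d m * d n :=
  Nat.Coprime.card_divisors_mul h

lemma d_prime_pow {p : ℕ} (hp : p.Prime) (e : ℕ) : d (p ^ e) = e + 1 := by
  simp [d, Nat.divisors_prime_pow hp]

lemma d_prod {k : ℕ} (p e : Fin k → ℕ) (hp : ∀ i, (p i).Prime)
    (hinj : Function.Injective p) (s : Finset (Fin k)) :
    d (∏ i ∈ s, p i ^ e i) = ∏ i ∈ s, (e i + 1) := by
  induction s using Finset.induction with
  | empty => simp [d]
  | @insert a s hns ih =>
    have hco : Nat.Coprime (p a ^ e a) (∏ i ∈ s, p i ^ e i) :=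
      Nat.Coprime.prod_right fun i hi => Nat.Coprime.pow _ _
        ((Nat.coprime_primes (hp a) (hp i)).2 fun h => hns (hinj h ▸ hi))
    rw [Finset.prod_insert hns, Finset.prod_insert hns, d_mul hco, ih,
      d_prime_pow (hp a)]

lemma coprime_succ_right (n : ℕ) : Nat.Coprime n (n + 1) := by
  simpa using (Nat.coprime_self_add_right (m := n) (n := 1)).2 (Nat.coprime_one_right n)

/-- With `a = 4·∏ pᵢ^{xᵢ}·∏ qᵢ^{uᵢ}`, `a₁ = a`, `a₂ = a+1`, `a₃ = a+2`, `r₁ = 1`,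
`r₂ = ∏ pᵢ^{yᵢ}`, `r₃ = ∏ qᵢ^{vᵢ}` for distinct odd primes `pᵢ, qᵢ` and positive
exponents, one has
`d(a₂r₁)d(a₃r₂)d((a₁/2)r₃) / (d(a₁r₂)d(a₂r₃)d((a₃/2)r₁))
  = (4/3)·∏ (xᵢ+1)(yᵢ+1)/(xᵢ+yᵢ+1) · ∏ (uᵢ+vᵢ+1)/((uᵢ+1)(vᵢ+1))`. -/
theorem stmt_9 (k l : ℕ) (p : Fin k → ℕ) (q : Fin l → ℕ)
    (hp : ∀ i, (p i).Prime) (hq : ∀ i, (q i).Prime)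
    (hpodd : ∀ i, Odd (p i)) (hqodd : ∀ i, Odd (q i))
    (hpinj : Function.Injective p) (hqinj : Function.Injective q)
    (hpq : ∀ i j, p i ≠ q j)
    (x y : Fin k → ℕ) (u v : Fin l → ℕ)
    (hx : ∀ i, 0 < x i) (hy : ∀ i, 0 < y i) (hu : ∀ i, 0 < u i) (hv : ∀ i, 0 < v i) :
    (letI a : ℕ := 4 * (∏ i, p i ^ x i) * (∏ i, q i ^ u i);
     letI r₁ : ℕ := 1;
     letI r₂ : ℕ := ∏ i, p i ^ y i;
     letI r₃ : ℕ := ∏ i, q i ^ v i;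
     ((d ((a + 1) * r₁) : ℚ) * (d ((a + 2) * r₂) : ℚ) * (d ((a / 2) * r₃) : ℚ)) /
       ((d (a * r₂) : ℚ) * (d ((a + 1) * r₃) : ℚ) * (d (((a + 2) / 2) * r₁) : ℚ))) =
      (4 / 3 : ℚ) * (∏ i, ((x i + 1 : ℚ) * (y i + 1)) / (x i + y i + 1)) *
        (∏ i, ((u i + v i + 1 : ℚ)) / ((u i + 1) * (v i + 1))) := by
  set P : ℕ := ∏ i, p i ^ x i with hP
  set Q : ℕ := ∏ i, q i ^ u i with hQ
  set R2 : ℕ := ∏ i, p i ^ y i with hR2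
  set R3 : ℕ := ∏ i, q i ^ v i with hR3
  set a : ℕ := 4 * P * Q with ha
  set b : ℕ := 2 * P * Q + 1 with hb
  -- dvd facts
  have hpP : ∀ i, p i ∣ P := fun i =>
    dvd_trans (dvd_pow_self _ (hx i).ne') (Finset.dvd_prod_of_mem _ (Finset.mem_univ i))
  have hqQ : ∀ j, q j ∣ Q := fun j =>
    dvd_trans (dvd_pow_self _ (hu j).ne') (Finset.dvd_prod_of_mem _ (Finset.mem_univ j))
  have hpa : ∀ i, p i ∣ a := fun i => Dvd.dvd.mul_right ((hpP i).mul_left 4) Q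
  have hqa : ∀ j, q j ∣ a := fun j => Dvd.dvd.mul_left (hqQ j) _
  -- coprimality with 2
  have hc2p : ∀ i (e : ℕ), Nat.Coprime 2 (p i ^ e) := fun i e =>
    (Nat.coprime_two_left.2 (hpodd i)).pow_right e
  have hc2q : ∀ j (e : ℕ), Nat.Coprime 2 (q j ^ e) := fun j e =>
    (Nat.coprime_two_left.2 (hqodd j)).pow_right e
  have hc2P : Nat.Coprime 2 P := Nat.Coprime.prod_right fun i _ => hc2p i _
  have hc2Q : Nat.Coprime 2 Q := Nat.Coprime.prod_right fun j _ => hc2q j _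
  have hc2R2 : Nat.Coprime 2 R2 := Nat.Coprime.prod_right fun i _ => hc2p i _
  have hc2R3 : Nat.Coprime 2 R3 := Nat.Coprime.prod_right fun j _ => hc2q j _
  have hbodd : Odd b := by
    refine Even.add_one ?_
    exact (even_two.mul_right P).mul_right Q
  have hc2b : Nat.Coprime 2 b := Nat.coprime_two_left.2 hbodd
  -- p vs q coprime
  have hcpq : ∀ i j, Nat.Coprime (p i) (q j) := fun i j =>
    (Nat.coprime_primes (hp i) (hq j)).2 (hpq i j)
  have hcPQ : ∀ (e : Fin k → ℕ) (g : Fin l → ℕ),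
      Nat.Coprime (∏ i, p i ^ e i) (∏ j, q j ^ g j) := fun e g =>
    Nat.Coprime.prod_left fun i _ => Nat.Coprime.prod_right fun j _ =>
      (Nat.Coprime.pow _ _ (hcpq i j))
  -- p coprime to b (since p ∣ 2PQ)
  have hpb : ∀ i, Nat.Coprime (p i) b := fun i => by
    have h1 : p i ∣ 2 * P * Q := Dvd.dvd.mul_right ((hpP i).mul_left 2) Q
    exact Nat.Coprime.coprime_dvd_left h1 (coprime_succ_right _)
  have hcbR2 : Nat.Coprime b R2 := by
    rw [hR2]
    exact Nat.Coprime.prod_right fun i _ => ((hpb i).symm).pow_right _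
  -- q coprime to a+1
  have hqa1 : ∀ j, Nat.Coprime (q j) (a + 1) :=
    fun j => Nat.Coprime.coprime_dvd_left (hqa j) (coprime_succ_right a)
  have hca1R3 : Nat.Coprime (a + 1) R3 := by
    rw [hR3]
    exact Nat.Coprime.prod_right fun j _ => ((hqa1 j).symm).pow_right _
  -- p coprime to a+2
  have hpa2 : ∀ i, Nat.Coprime (p i) (a + 2) := fun i => by
    rw [(hp i).coprime_iff_not_dvd]
    intro hdvd
    have h2 : p i ∣ 2 := by
      have := Nat.dvd_sub hdvd (hpa i)
      simpa using this
    have heq : p i = 2 := (Nat.prime_dvd_prime_iff_eq (hp i) Nat.prime_two).mp h2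
    have := Nat.odd_iff.mp (hpodd i)
    omega
  -- arithmetic rewrites
  have ha2 : a + 2 = 2 * b := by rw [ha, hb]; ring
  have ha2d : (a + 2) / 2 = b := by rw [ha2]; omega
  have hadiv : a / 2 = 2 * (P * Q) := by
    rw [ha, show 4 * P * Q = 2 * (P * Q) * 2 by ring]
    exact Nat.mul_div_cancel _ (by norm_num)
  -- d computations
  have hd2 : d 2 = 2 := by decide
  have hd4 : d 4 = 3 := by decide
  have hdP : ∀ (e : Fin k → ℕ), d (∏ i, p i ^ e i) = ∏ i, (e i + 1) :=
    fun e => d_prod p e hp hpinj _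
  have hdQ : ∀ (e : Fin l → ℕ), d (∏ j, q j ^ e j) = ∏ j, (e j + 1) :=
    fun e => d_prod q e hq hqinj _
  -- term 1: d((a+1)*1) = d(a+1)
  have ht1 : d ((a + 1) * 1) = d (a + 1) := by rw [mul_one]
  -- term 2: d((a+2)*R2) = 2 * d b * ∏ (y i + 1)
  have ht2 : d ((a + 2) * R2) = 2 * d b * ∏ i, (y i + 1) := by
    have h : (a + 2) * R2 = 2 * (b * R2) := by rw [ha2]; ring
    rw [h, d_mul (hc2b.mul_right hc2R2), hd2, d_mul hcbR2, hR2, hdP, mul_assoc]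
  -- term 3: d((a/2)*R3) = 2 * (∏ (x i +1)) * ∏ (u i + v i + 1)
  have hQR3 : Q * R3 = ∏ j, q j ^ (u j + v j) := by
    rw [hQ, hR3, ← Finset.prod_mul_distrib]
    exact Finset.prod_congr rfl fun j _ => (pow_add _ _ _).symm
  have ht3 : d ((a / 2) * R3) = 2 * (∏ i, (x i + 1)) * ∏ j, (u j + v j + 1) := by
    have h : (a / 2) * R3 = 2 * (P * (Q * R3)) := by rw [hadiv]; ring
    have hc : Nat.Coprime P (Q * R3) := by
      rw [hQR3, hP]; exact hcPQ x (fun j => u j + v j)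
    rw [h, d_mul (hc2P.mul_right (hc2Q.mul_right hc2R3)), hd2, d_mul hc, hQR3,
      hP, hdP, hdQ, mul_assoc]
  -- term 4: d(a*R2) = 3 * ∏ (x+y+1) * ∏ (u+1)
  have hPR2 : P * R2 = ∏ i, p i ^ (x i + y i) := by
    rw [hP, hR2, ← Finset.prod_mul_distrib]
    exact Finset.prod_congr rfl fun i _ => (pow_add _ _ _).symm
  have ht4 : d (a * R2) = 3 * (∏ i, (x i + y i + 1)) * ∏ j, (u j + 1) := by
    have h : a * R2 = 4 * ((P * R2) * Q) := by rw [ha]; ring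
    have hc4 : Nat.Coprime 4 ((P * R2) * Q) := by
      rw [show (4:ℕ) = 2^2 by norm_num]
      exact (Nat.Coprime.mul_right (hc2P.mul_right hc2R2) hc2Q).pow_left _
    have hc : Nat.Coprime (P * R2) Q := by rw [hPR2, hQ]; exact hcPQ _ _
    rw [h, d_mul hc4, d_mul hc, hPR2, hQ, hdP, hdQ, hd4]
    ring
  -- term 5
  have ht5 : d ((a + 1) * R3) = d (a + 1) * ∏ j, (v j + 1) := by
    rw [d_mul hca1R3, hR3, hdQ]
  -- term 6
  have ht6 : d (((a + 2) / 2) * 1) = d b := by rw [ha2d, mul_one]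
  -- positivity
  have hb0 : 0 < d b := by
    rw [d]
    exact Finset.card_pos.mpr ⟨1, Nat.one_mem_divisors.2 (by rw [hb]; omega)⟩
  have ha10 : 0 < d (a + 1) := by
    rw [d]
    exact Finset.card_pos.mpr ⟨1, Nat.one_mem_divisors.2 (by omega)⟩
  show ((d ((a + 1) * 1) : ℚ) * (d ((a + 2) * R2) : ℚ) * (d ((a / 2) * R3) : ℚ)) /
       ((d (a * R2) : ℚ) * (d ((a + 1) * R3) : ℚ) * (d (((a + 2) / 2) * 1) : ℚ)) = _
  rw [ht1, ht2, ht3, ht4, ht5, ht6]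
  rw [Finset.prod_div_distrib, Finset.prod_div_distrib, Finset.prod_mul_distrib,
    Finset.prod_mul_distrib]
  have e1 : ∏ i, ((x i : ℚ) + 1) = ((∏ i, (x i + 1) : ℕ) : ℚ) := by push_cast; rfl
  have e2 : ∏ i, ((y i : ℚ) + 1) = ((∏ i, (y i + 1) : ℕ) : ℚ) := by push_cast; rfl
  have e3 : ∏ i, ((x i : ℚ) + y i + 1) = ((∏ i, (x i + y i + 1) : ℕ) : ℚ) := by
    push_cast; rfl
  have e4 : ∏ j, ((u j : ℚ) + v j + 1) = ((∏ j, (u j + v j + 1) : ℕ) : ℚ) := by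
    push_cast; rfl
  have e5 : ∏ j, ((u j : ℚ) + 1) = ((∏ j, (u j + 1) : ℕ) : ℚ) := by push_cast; rfl
  have e6 : ∏ j, ((v j : ℚ) + 1) = ((∏ j, (v j + 1) : ℕ) : ℚ) := by push_cast; rfl
  rw [e1, e2, e3, e4, e5, e6]
  have n1 : ((∏ i, (x i + 1) : ℕ) : ℚ) ≠ 0 := by positivity
  have n2 : ((∏ i, (y i + 1) : ℕ) : ℚ) ≠ 0 := by positivity
  have n3 : ((∏ i, (x i + y i + 1) : ℕ) : ℚ) ≠ 0 := by positivity
  have n4 : ((∏ j, (u j + v j + 1) : ℕ) : ℚ) ≠ 0 := by positivity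
  have n5 : ((∏ j, (u j + 1) : ℕ) : ℚ) ≠ 0 := by positivity
  have n6 : ((∏ j, (v j + 1) : ℕ) : ℚ) ≠ 0 := by positivity
  have nb : (d b : ℚ) ≠ 0 := by exact_mod_cast hb0.ne'
  have na : (d (a + 1) : ℚ) ≠ 0 := by exact_mod_cast ha10.ne'
  push_cast
  field_simp
  ring
end

section
/- The multiplicative subgroup G of the positive rationals generated by the set {f(x, y) : x, y positive integers}, where f(x, y) = (x+1)(y+1)/(x+y+1), is equal to the whole group of positive rationals. -/
/-- The multiplicative group of positive rational numbers. -/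
abbrev Qpos := {q : ℚ // 0 < q}

/-- `f x y = (x+1)(y+1)/(x+y+1)`. -/
def f (x y : ℕ) : ℚ := ((x + 1 : ℚ) * (y + 1)) / (x + y + 1)

/-- `G` is the subgroup of the positive rationals generated by
`{f x y : x, y positive integers}`. -/
def G : Subgroup Qpos :=
  Subgroup.closure {g : Qpos | ∃ x y : ℕ, 0 < x ∧ 0 < y ∧ (g : ℚ) = f x y}

/-!
Since `f 1 n = 2 (n + 1) / (n + 2)` and `2 = f 1 1 * f 1 2`, each ratio `(n + 2) / (n + 1) = 2 / f 1 n`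
with `n ≥ 1` lies in `G`. Telescoping puts every positive integer in `G`, and then every positive
rational `num / den`.
-/

lemma Qpos.mem_of_val_eq {H : Subgroup Qpos} {g h : Qpos} (hg : g ∈ H) (e : (h : ℚ) = g) :
    h ∈ H :=
  Subtype.ext e ▸ hg

lemma Qpos.subgroup_eq_top_of_natCast_mem {H : Subgroup Qpos}
    (hH : ∀ (n : ℕ) (hn : (0 : ℚ) < n), ⟨n, hn⟩ ∈ H) : H = ⊤ := by
  refine (Subgroup.eq_top_iff' H).2 fun q => ?_
  have hnum : (0 : ℚ) < q.1.num.natAbs := by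
    simpa [Int.natAbs_pos, Rat.num_ne_zero] using q.2.ne'
  refine Qpos.mem_of_val_eq (mul_mem (hH _ hnum) (inv_mem (hH q.1.den (by positivity)))) ?_
  have : ((q.1.num.natAbs : ℕ) : ℚ) = q.1.num := by
    rw [Nat.cast_natAbs, abs_of_pos (Rat.num_pos.2 q.2)]
  show q.1 = (q.1.num.natAbs : ℚ) * (q.1.den : ℚ)⁻¹
  rw [this, ← div_eq_mul_inv, Rat.num_div_den]

lemma f_pos (x y : ℕ) : 0 < f x y := by
  unfold f; positivity

lemma f_mem_G {x y : ℕ} (hx : 0 < x) (hy : 0 < y) : (⟨f x y, f_pos x y⟩ : Qpos) ∈ G :=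
  Subgroup.subset_closure ⟨x, y, hx, hy, rfl⟩

lemma f_one_left (n : ℕ) : f 1 n = 2 * (n + 1) / (n + 2) := by
  unfold f; push_cast; ring_nf

lemma two_mem_G : (⟨2, two_pos⟩ : Qpos) ∈ G :=
  Qpos.mem_of_val_eq (mul_mem (f_mem_G one_pos one_pos) (f_mem_G one_pos two_pos)) <| by
    simp only [f_one_left]; norm_num

lemma natCast_succ_mem_G (n : ℕ) : (⟨n + 1, n.cast_add_one_pos⟩ : Qpos) ∈ G := by
  induction n using Nat.twoStepInduction with
  | zero => exact Qpos.mem_of_val_eq (one_mem G) (by norm_num)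
  | one => exact Qpos.mem_of_val_eq two_mem_G (by norm_num)
  | more n _ ih =>
    refine Qpos.mem_of_val_eq (div_mem (mul_mem ih two_mem_G) (f_mem_G one_pos n.succ_pos)) ?_
    show _ = _ * 2 / f 1 (n + 1)
    rw [f_one_left]
    field_simp
    push_cast
    ring

/-- `G` is the whole group of positive rationals. -/
theorem stmt_12 : G = ⊤ :=
  Qpos.subgroup_eq_top_of_natCast_mem fun n hn => by
    obtain ⟨m, rfl⟩ := Nat.exists_eq_succ_of_ne_zero (by exact_mod_cast hn.ne' : n ≠ 0)
    exact Qpos.mem_of_val_eq (natCast_succ_mem_G m) (by push_cast; rfl)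
end

section
/- Every prime number p belongs to the multiplicative subgroup G of the positive rationals generated by {f(x, y) : x, y positive integers}, where f(x, y) = (x+1)(y+1)/(x+y+1). In particular, 2 = f(2, 3) ∈ G, and for every odd prime p = 2x+1 one has p = (x+1)²/f(x, x). -/
lemma f_self (x : ℕ) : f x x = ((x : ℚ) + 1) ^ 2 / (2 * x + 1) := by
  rw [f]; ring

lemma two_mul_add_one_eq_sq_div_f_self (x : ℕ) :
    ((2 * x + 1 : ℕ) : ℚ) = ((x : ℚ) + 1) ^ 2 / f x x := by
  rw [f_self, div_div_cancel₀ (by positivity)]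
  push_cast; ring

lemma f_two_three : f 2 3 = 2 := by
  norm_num [f]

lemma mem_G_of_coe_eq {q r : Qpos} (hr : r ∈ G) (h : (r : ℚ) = q) : q ∈ G :=
  Subtype.ext h ▸ hr

lemma natCast_mem_G (n : ℕ) (hn : 0 < n) : (⟨n, Nat.cast_pos.mpr hn⟩ : Qpos) ∈ G := by
  induction n using Nat.strong_induction_on with
  | _ n ih =>
    obtain ⟨k, rfl | rfl⟩ := Nat.even_or_odd' n
    · obtain rfl | hk : k = 1 ∨ 2 ≤ k := by omega
      · exact mem_G_of_coe_eq (f_mem_G two_pos three_pos) (by simp [f_two_three])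
      · exact mem_G_of_coe_eq (mul_mem (ih 2 (by omega) two_pos) (ih k (by omega) (by omega)))
          (by push_cast; rfl)
    · obtain rfl | hk : k = 0 ∨ 0 < k := by omega
      · exact mem_G_of_coe_eq (one_mem G) (by simp)
      · exact mem_G_of_coe_eq
          (mul_mem (pow_mem (ih (k + 1) (by omega) k.succ_pos) 2) (inv_mem (f_mem_G hk hk)))
          (by exact_mod_cast (two_mul_add_one_eq_sq_div_f_self k).symm)

/-- Every prime `p` belongs to `G`; in particular `2 = f 2 3 ∈ G`, and for every
odd prime `p = 2x+1` one has `p = (x+1)²/f(x,x)`. -/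
theorem stmt_13 :
    (∀ (p : ℕ) (hp : p.Prime),
      (⟨(p : ℚ), by exact_mod_cast hp.pos⟩ : Qpos) ∈ G) ∧
    f 2 3 = 2 ∧
    (∀ x : ℕ, 0 < x → (2 * x + 1).Prime →
      ((2 * x + 1 : ℕ) : ℚ) = ((x : ℚ) + 1) ^ 2 / f x x) :=
  ⟨fun p hp => natCast_mem_G p hp.pos, f_two_three,
    fun x _ _ => two_mul_add_one_eq_sq_div_f_self x⟩
end
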